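/- V_n·P_n(2^n)·V_nᵀ = I_{2^n - 2} ⊕ X, i.e., the permutation matrix that swaps the last two basis vectors and fixes all others (the generalized Toffoli gate on n qubits). -/
import Mathlib


open Matrix

noncomputable section

/-- The 2×2 Hadamard matrix. -/
def Hm : Matrix (Fin 2) (Fin 2) ℝ :=
  !![1/Real.sqrt 2, 1/Real.sqrt 2; 1/Real.sqrt 2, -(1/Real.sqrt 2)]

/-- The Pauli X matrix. -/
def Xm : Matrix (Fin 2) (Fin 2) ℝ := !![0, 1; 1, 0]

/-- The Pauli Z matrix. -/
def Zm : Matrix (Fin 2) (Fin 2) ℝ := !![1, 0; 0, -1]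

/-- n-fold Kronecker (tensor) power of a 2×2 matrix, with basis indexed by
bit strings `Fin n → Fin 2` (position 0 = first/most significant qubit). -/
def tpow (M : Matrix (Fin 2) (Fin 2) ℝ) (n : ℕ) :
    Matrix (Fin n → Fin 2) (Fin n → Fin 2) ℝ :=
  Matrix.of fun x y => ∏ i, M (x i) (y i)

/-- The 2×2 matrix `M` acting on qubit `p`, identity on all other qubits. -/
def gateAt (M : Matrix (Fin 2) (Fin 2) ℝ) {n : ℕ} (p : Fin n) :
    Matrix (Fin n → Fin 2) (Fin n → Fin 2) ℝ :=
  Matrix.of fun x y =>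
    M (x p) (y p) * ∏ i ∈ Finset.univ.erase p, (if x i = y i then (1 : ℝ) else 0)

/-- The cyclic shift of the tensor factors on bit strings: `shiftFun n a`
reads position `i+1` of `a` at position `i`. -/
def shiftFun (n : ℕ) : (Fin (n + 1) → Fin 2) → (Fin (n + 1) → Fin 2) :=
  fun a i => a (i + 1)

/-- The permutation matrix of the cyclic shift of the qubits
`|a₁a₂…aₙ⟩ ↦ |aₙa₁…a_{n-1}⟩` (the row indexed by `x` has its 1 in the column
indexed by `shiftFun n x`, i.e. the basis vector of `x₂…xₙx₁` is sent to the
basis vector of `x`); this is the permutation `(1,3,…,2ⁿ−1,2,4,…,2ⁿ)`. -/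
def Pshift (n : ℕ) : Matrix (Fin (n + 1) → Fin 2) (Fin (n + 1) → Fin 2) ℝ :=
  Matrix.of fun x y => if x = shiftFun n y then 1 else 0

/-- The matrix `V_{n+1} = P · (H ⊗ I^{⊗ n})` on `n+1` qubits. -/
def Vmat (n : ℕ) : Matrix (Fin (n + 1) → Fin 2) (Fin (n + 1) → Fin 2) ℝ :=
  Pshift n * gateAt Hm (0 : Fin (n + 1))

/-- `P_n(i)`: diagonal matrix with `-1` at the basis vector indexed by `i`
and `+1` elsewhere. -/
def PnDiag {n : ℕ} (i : Fin n → Fin 2) :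
    Matrix (Fin n → Fin 2) (Fin n → Fin 2) ℝ :=
  Matrix.diagonal fun x => if x = i then -1 else 1

/-- The permutation of bit strings swapping the last two basis vectors in
lexicographic order (1…10 ↔ 1…11) and fixing all others. -/
def swapLastTwo (n : ℕ) : (Fin (n + 1) → Fin 2) → (Fin (n + 1) → Fin 2) :=
  fun y =>
    if ∀ i : Fin (n + 1), i ≠ Fin.last n → y i = 1 then
      Function.update y (Fin.last n) (1 - y (Fin.last n))
    else y

/-- indicator product -/
lemma prodInd {n : ℕ} (p : Fin n) (x y : Fin n → Fin 2) :
    (∏ i ∈ Finset.univ.erase p, (if x i = y i then (1 : ℝ) else 0)) =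
      if ∀ i, i ≠ p → x i = y i then 1 else 0 := by
  by_cases h : ∀ i, i ≠ p → x i = y i
  · rw [if_pos h]
    apply Finset.prod_eq_one
    intro i hi
    rw [if_pos (h i (Finset.ne_of_mem_erase hi))]
  · rw [if_neg h]
    push_neg at h
    obtain ⟨i, hip, hxy⟩ := h
    exact Finset.prod_eq_zero (Finset.mem_erase.2 ⟨hip, Finset.mem_univ i⟩) (if_neg hxy)

def gfun (n : ℕ) (v : Fin (n + 1) → Fin 2) : Fin (n + 1) → Fin 2 :=
  if ∀ i : Fin (n + 1), i ≠ 0 → v i = 1 then Function.update v 0 (1 - v 0) else v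

lemma hhalf : (1/Real.sqrt 2) * (1/Real.sqrt 2) = 1/2 := by
  rw [div_mul_div_comm, Real.mul_self_sqrt (by norm_num)]
  norm_num

lemma key (n : ℕ) (u v : Fin (n + 1) → Fin 2) :
    ∑ z, gateAt Hm (0 : Fin (n+1)) u z *
        (if z = (fun _ => (1 : Fin 2)) then (-1 : ℝ) else 1) * gateAt Hm 0 v z =
      if u = gfun n v then 1 else 0 := by
  simp only [gateAt, Matrix.of_apply, prodInd]
  by_cases hB : ∀ i : Fin (n+1), i ≠ 0 → u i = v i
  · -- u and v agree off 0
    have hab : Function.update u 0 (0 : Fin 2) ≠ Function.update u 0 1 := by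
      intro h
      have := congrFun h 0
      simp at this
    have hsub : (({Function.update u 0 0, Function.update u 0 1} : Finset (Fin (n+1) → Fin 2)))
        ⊆ Finset.univ := Finset.subset_univ _
    rw [← Finset.sum_subset hsub ?van]
    case van =>
      intro z _ hz
      have hzu : ¬ ∀ i, i ≠ (0 : Fin (n+1)) → u i = z i := by
        intro hall
        apply hz
        have hzeq : z = Function.update u 0 (z 0) := by
          funext i
          rcases eq_or_ne i 0 with rfl | hi
          · simp
          · rw [Function.update_of_ne hi, hall i hi]
        have : z 0 = 0 ∨ z 0 = 1 := by omega
        rcases this with h0 | h0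
        · rw [hzeq, h0]; exact Finset.mem_insert_self _ _
        · rw [hzeq, h0]; exact Finset.mem_insert_of_mem (Finset.mem_singleton_self _)
      rw [if_neg hzu]
      ring
    rw [Finset.sum_pair hab]
    have e0 : (Function.update u 0 (0:Fin 2)) 0 = 0 := by simp
    have e1 : (Function.update u 0 (1:Fin 2)) 0 = 1 := by simp
    have du : ∀ c : Fin 2, (∀ i, i ≠ (0 : Fin (n+1)) → u i = Function.update u 0 c i) := by
      intro c i hi; rw [Function.update_of_ne hi]
    have dv : ∀ c : Fin 2, (∀ i, i ≠ (0 : Fin (n+1)) → v i = Function.update u 0 c i) := by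
      intro c i hi; rw [Function.update_of_ne hi, ← hB i hi]
    have d0 : (Function.update u 0 (0:Fin 2)) ≠ (fun _ => (1 : Fin 2)) := by
      intro h
      have := congrFun h 0
      simp at this
    rw [if_pos (du 0), if_pos (du 1), if_pos (dv 0), if_pos (dv 1), if_neg d0, e0, e1]
    by_cases hc : ∀ i : Fin (n+1), i ≠ 0 → u i = 1
    · -- control on
      have d1 : (Function.update u 0 (1:Fin 2)) = (fun _ => (1 : Fin 2)) := by
        funext i
        rcases eq_or_ne i 0 with rfl | hi
        · simp
        · rw [Function.update_of_ne hi, hc i hi]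
      rw [if_pos d1]
      have hcv : ∀ i : Fin (n+1), i ≠ 0 → v i = 1 := fun i hi => (hB i hi) ▸ hc i hi
      have hg : gfun n v = Function.update v 0 (1 - v 0) := if_pos hcv
      have hiff : (u = gfun n v) ↔ u 0 = 1 - v 0 := by
        rw [hg]
        constructor
        · intro h; have := congrFun h 0; simpa using this
        · intro h
          funext i
          rcases eq_or_ne i 0 with rfl | hi
          · simpa using h
          · rw [Function.update_of_ne hi, hB i hi]
      simp only [hiff]
      have hu2 : u 0 = 0 ∨ u 0 = 1 := by omega
      have hv2 : v 0 = 0 ∨ v 0 = 1 := by omega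
      rcases hu2 with hu | hu <;> rcases hv2 with hv | hv <;>
        rw [hu, hv] <;>
        simp only [Hm, Matrix.cons_val_zero, Matrix.cons_val_one, Matrix.head_cons,
          Matrix.cons_val', Matrix.head_fin_const] <;>
        norm_num <;> linear_combination 2 * hhalf
    · -- control off
      have d1 : (Function.update u 0 (1:Fin 2)) ≠ (fun _ => (1 : Fin 2)) := by
        intro h
        apply hc
        intro i hi
        have := congrFun h i
        rwa [Function.update_of_ne hi] at this
      rw [if_neg d1]
      have hcv : ¬ ∀ i : Fin (n+1), i ≠ 0 → v i = 1 := by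
        intro h; exact hc fun i hi => (hB i hi).symm ▸ h i hi
      have hg : gfun n v = v := if_neg hcv
      have hiff : (u = gfun n v) ↔ u 0 = v 0 := by
        rw [hg]
        constructor
        · intro h; rw [h]
        · intro h
          funext i
          rcases eq_or_ne i 0 with rfl | hi
          · exact h
          · exact hB i hi
      simp only [hiff]
      have hu2 : u 0 = 0 ∨ u 0 = 1 := by omega
      have hv2 : v 0 = 0 ∨ v 0 = 1 := by omega
      rcases hu2 with hu | hu <;> rcases hv2 with hv | hv <;>
        rw [hu, hv] <;>
        simp only [Hm, Matrix.cons_val_zero, Matrix.cons_val_one, Matrix.head_cons,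
          Matrix.cons_val', Matrix.head_fin_const] <;>
        norm_num <;> linear_combination 2 * hhalf
  · -- u, v differ off 0 : both sides 0
    have hr : u ≠ gfun n v := by
      intro h
      apply hB
      intro i hi
      rw [h]
      unfold gfun
      split
      · rw [Function.update_of_ne hi]
      · rfl
    rw [if_neg hr]
    apply Finset.sum_eq_zero
    intro z _
    by_cases hu : ∀ i, i ≠ (0 : Fin (n+1)) → u i = z i
    · have hv : ¬ ∀ i, i ≠ (0 : Fin (n+1)) → v i = z i := by
        intro hv
        exact hB fun i hi => (hu i hi).trans (hv i hi).symm
      rw [if_neg hv]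
      ring
    · rw [if_neg hu]
      ring

def shiftFun' (n : ℕ) : (Fin (n + 1) → Fin 2) → (Fin (n + 1) → Fin 2) :=
  fun a i => a (i + 1)

def unshiftFun (n : ℕ) : (Fin (n + 1) → Fin 2) → (Fin (n + 1) → Fin 2) :=
  fun a i => a (i - 1)

lemma zero_sub_one (n : ℕ) : (0 : Fin (n + 1)) - 1 = Fin.last n :=
  sub_eq_iff_eq_add.2 (Fin.last_add_one n).symm

lemma sub_one_eq_last {n : ℕ} (i : Fin (n + 1)) : i - 1 = Fin.last n ↔ i = 0 := by
  rw [sub_eq_iff_eq_add, Fin.last_add_one]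

lemma shift_unshift (n : ℕ) (x : Fin (n + 1) → Fin 2) :
    shiftFun' n (unshiftFun n x) = x := by
  funext i
  simp [shiftFun', unshiftFun]

lemma unshift_inj (n : ℕ) : Function.Injective (unshiftFun n) := by
  intro x y h
  have := congrArg (shiftFun' n) h
  rwa [shift_unshift, shift_unshift] at this

lemma tau_sw (n : ℕ) (y : Fin (n + 1) → Fin 2) :
    unshiftFun n (swapLastTwo n y) = gfun n (unshiftFun n y) := by
  have hcond : (∀ i : Fin (n + 1), i ≠ Fin.last n → y i = 1) ↔
      (∀ i : Fin (n + 1), i ≠ 0 → unshiftFun n y i = 1) := by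
    constructor
    · intro h i hi
      exact h (i - 1) (fun he => hi ((sub_one_eq_last i).1 he))
    · intro h j hj
      have : y ((j + 1) - 1) = 1 := h (j + 1) (fun he => hj (by
        have : j + 1 - 1 = (0 : Fin (n+1)) - 1 := by rw [he]
        rwa [add_sub_cancel_right, zero_sub_one] at this))
      rwa [add_sub_cancel_right] at this
  unfold swapLastTwo gfun
  by_cases h : ∀ i : Fin (n + 1), i ≠ Fin.last n → y i = 1
  · rw [if_pos h, if_pos (hcond.1 h)]
    funext j
    rcases eq_or_ne j 0 with rfl | hj
    · show Function.update y (Fin.last n) (1 - y (Fin.last n)) ((0:Fin (n+1)) - 1) = _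
      rw [zero_sub_one, Function.update_self, Function.update_self]
      show _ = 1 - y ((0:Fin (n+1)) - 1)
      rw [zero_sub_one]
    · show Function.update y (Fin.last n) (1 - y (Fin.last n)) (j - 1) = _
      rw [Function.update_of_ne (fun he => hj ((sub_one_eq_last j).1 he)),
        Function.update_of_ne hj]
      rfl
  · rw [if_neg h, if_neg (fun hh => h (hcond.2 hh))]

lemma Vmat_apply (n : ℕ) (x z : Fin (n + 1) → Fin 2) :
    Vmat n x z = gateAt Hm (0 : Fin (n + 1)) (unshiftFun n x) z := by
  rw [Vmat, Matrix.mul_apply]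
  have hiff : ∀ w, (x = shiftFun n w) ↔ (w = unshiftFun n x) := by
    intro w
    constructor
    · intro h
      funext i
      show w i = x (i - 1)
      rw [h]
      show w i = w (i - 1 + 1)
      rw [sub_add_cancel]
    · rintro rfl
      exact (shift_unshift n x).symm
  simp only [Pshift, Matrix.of_apply, hiff, ite_mul, one_mul, zero_mul]
  rw [Finset.sum_ite_eq' Finset.univ]
  simp


/-- V_n · P_n(2^n) · V_nᵀ = I_{2^n-2} ⊕ X, the permutation matrix
swapping the last two basis vectors (generalized Toffoli). -/
theorem Vmat_conj_PnDiag_toffoli (n : ℕ) :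
    Vmat n * PnDiag (fun _ => 1) * (Vmat n)ᵀ =
      Matrix.of fun x y => if x = swapLastTwo n y then (1 : ℝ) else 0 := by
  ext x y
  rw [Matrix.of_apply, Matrix.mul_apply]
  simp only [PnDiag, Matrix.mul_diagonal, Matrix.transpose_apply, Vmat_apply]
  rw [key n (unshiftFun n x) (unshiftFun n y), ← tau_sw]
  by_cases h : x = swapLastTwo n y
  · rw [if_pos h, if_pos (by rw [h])]
  · rw [if_neg h, if_neg (fun he => h (unshift_inj n he))]
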